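/- arXiv:math/0511044 — 3 statements merged into one kernel-verified Lean document; each statement's English description precedes it below -/
import Mathlib

section
/- Let p ∈ (1,2) and suppose u, y are elements of a normed space such that ‖u + α·y‖^p = ‖u‖^p + α^p·‖y‖^p for all α ∈ [0,1] (a disjointness-type identity). If moreover u satisfies ‖(1+α)·u‖ ≤ ‖u + α·y‖ for all α ∈ [0,1], then u = 0. -/
theorem stmt1 {X : Type*} [NormedAddCommGroup X] [NormedSpace ℝ X]
    (p : ℝ) (hp1 : 1 < p) (hp2 : p < 2) (u y : X)
    (hdisj : ∀ α ∈ Set.Icc (0:ℝ) 1, ‖u + α • y‖ ^ p = ‖u‖ ^ p + α ^ p * ‖y‖ ^ p)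
    (hcontr : ∀ α ∈ Set.Icc (0:ℝ) 1, ‖(1 + α) • u‖ ≤ ‖u + α • y‖) :
    u = 0 := by
  by_contra hu
  have hupos : (0:ℝ) < ‖u‖ := norm_pos_iff.mpr hu
  have hppos : (0:ℝ) < p := lt_trans one_pos hp1
  have hup : (0:ℝ) < ‖u‖ ^ p := Real.rpow_pos_of_pos hupos p
  -- key inequality for α ∈ Ioc 0 1
  have key : ∀ α ∈ Set.Ioc (0:ℝ) 1, p * ‖u‖ ^ p ≤ α ^ (p - 1) * ‖y‖ ^ p := by
    intro α hα
    obtain ⟨hα0, hα1⟩ := hα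
    have hmem : α ∈ Set.Icc (0:ℝ) 1 := ⟨le_of_lt hα0, hα1⟩
    have h1 : (1 + α) * ‖u‖ ≤ ‖u + α • y‖ := by
      have := hcontr α hmem
      rwa [norm_smul, Real.norm_eq_abs, abs_of_pos (by linarith)] at this
    have h1p : ((1 + α) * ‖u‖) ^ p ≤ ‖u + α • y‖ ^ p :=
      Real.rpow_le_rpow (by positivity) h1 (le_of_lt hppos)
    rw [Real.mul_rpow (by linarith) (norm_nonneg u), hdisj α hmem] at h1p
    have hbern : 1 + p * α ≤ (1 + α) ^ p :=
      one_add_mul_self_le_rpow_one_add (by linarith) (le_of_lt hp1)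
    have h2 : (1 + p * α) * ‖u‖ ^ p ≤ ‖u‖ ^ p + α ^ p * ‖y‖ ^ p :=
      le_trans (mul_le_mul_of_nonneg_right hbern (le_of_lt hup)) h1p
    have h3 : p * α * ‖u‖ ^ p ≤ α ^ p * ‖y‖ ^ p := by nlinarith
    have hαp : α ^ p = α * α ^ (p - 1) := by
      rw [← Real.rpow_one_add' (le_of_lt hα0) (by linarith)]
      ring_nf
    rw [hαp] at h3
    have := (mul_le_mul_iff_right₀ hα0).mp (by linarith [h3] : α * (p * ‖u‖ ^ p) ≤ α * (α ^ (p - 1) * ‖y‖ ^ p))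
    linarith
  -- take α → 0⁺
  have htend : Filter.Tendsto (fun α : ℝ => α ^ (p - 1) * ‖y‖ ^ p)
      (nhdsWithin 0 (Set.Ioi 0)) (nhds 0) := by
    have h0 : Filter.Tendsto (fun α : ℝ => α ^ (p - 1)) (nhds 0) (nhds 0) := by
      have := (Real.continuousAt_rpow_const 0 (p - 1) (Or.inr (by linarith))).tendsto
      simpa [Real.zero_rpow (by linarith : p - 1 ≠ 0)] using this
    have h1 : Filter.Tendsto (fun α : ℝ => α ^ (p - 1)) (nhdsWithin 0 (Set.Ioi 0)) (nhds 0) :=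
      h0.mono_left nhdsWithin_le_nhds
    simpa using h1.mul_const (‖y‖ ^ p)
  have hev : ∀ᶠ α in nhdsWithin 0 (Set.Ioi 0), p * ‖u‖ ^ p ≤ α ^ (p - 1) * ‖y‖ ^ p := by
    have hIoc : Set.Ioc (0:ℝ) 1 ∈ nhdsWithin 0 (Set.Ioi 0) := by
      rw [← Set.Ioi_inter_Iic]
      exact Filter.inter_mem self_mem_nhdsWithin
        (nhdsWithin_le_nhds (Iic_mem_nhds one_pos))
    exact Filter.eventually_of_mem hIoc key
  have : p * ‖u‖ ^ p ≤ 0 :=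
    ge_of_tendsto htend hev
  nlinarith
end

section
/- Let X be a Banach lattice whose norm is strictly monotone on disjoint decompositions in the sense that ‖v₁ + v₂‖^p = ‖v₁‖^p + ‖v₂‖^p for disjoint v₁, v₂ (p ∈ (1,∞) fixed). Let P be a contractive projection on X and u ∈ range(P) with u = u·χ_A + u·χ_B, where χ_A, χ_B are band projections onto complementary bands. If ‖P(u·χ_A) restricted to band B‖ is denoted r, and P(u·χ_A) + P(u·χ_B) = u with the band projection of P(u·χ_B) contained in band B, then the band-B component of P(u·χ_A) is zero. -/
/-!
Write `x := P (πA u)`. Applying `πA` to `P (πA u) + P (πB u) = u` and using `πA (P (πB u)) = 0`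
gives `πA x = πA u`. Since `x = πA x + πB x` is a disjoint sum, `p`-additivity and contractivity give
`‖πA u‖ ^ p + ‖πB x‖ ^ p = ‖x‖ ^ p ≤ ‖πA u‖ ^ p`, so `πB x = 0` and hence `x = πA u`.
-/

theorem eq_zero_of_norm_add_rpow_eq_of_norm_add_le {E : Type*} [NormedAddGroup E] {p : ℝ}
    (hp : 0 < p) {a b : E} (hadd : ‖a + b‖ ^ p = ‖a‖ ^ p + ‖b‖ ^ p) (hle : ‖a + b‖ ≤ ‖a‖) :
    b = 0 := by
  have hmono : ‖a + b‖ ^ p ≤ ‖a‖ ^ p := Real.rpow_le_rpow (norm_nonneg _) hle hp.le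
  have hb : ‖b‖ ^ p = 0 :=
    le_antisymm (by linarith) (Real.rpow_nonneg (norm_nonneg _) _)
  exact norm_eq_zero.mp ((Real.rpow_eq_zero (norm_nonneg _) hp.ne').mp hb)

theorem stmt11_general {X : Type*} [NormedAddCommGroup X] [Lattice X] [Module ℝ X]
    (p : ℝ) (hp1 : 1 < p)
    (hpadd : ∀ v w : X, |v| ⊓ |w| = 0 → ‖v + w‖ ^ p = ‖v‖ ^ p + ‖w‖ ^ p)
    (P : X →ₗ[ℝ] X) (hPc : ∀ x, ‖P x‖ ≤ ‖x‖)
    (πA πB : X →ₗ[ℝ] X)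
    (hcompl : ∀ x, πA x + πB x = x)
    (hAB : ∀ x y : X, |πA x| ⊓ |πB y| = 0)
    (u : X) (hu : P u = u)
    (hsupp : πA (P (πB u)) = 0) :
    πB (P (πA u)) = 0 ∧ P (πA u) = πA u := by
  have hA : πA (P (πA u)) = πA u := by
    have h := congrArg πA (show P (πA u) + P (πB u) = u by rw [← map_add, hcompl, hu])
    rwa [map_add, hsupp, add_zero] at h
  have hB : πB (P (πA u)) = 0 := by
    refine eq_zero_of_norm_add_rpow_eq_of_norm_add_le (a := πA (P (πA u))) (by linarith)
      (hpadd _ _ (hAB _ _)) ?_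
    rw [hcompl, hA]
    exact hPc _
  refine ⟨hB, ?_⟩
  rw [← hcompl (P (πA u)), hA, hB, add_zero]

theorem stmt11 {X : Type*} [NormedAddCommGroup X] [Lattice X] [HasSolidNorm X] [IsOrderedAddMonoid X] [Module ℝ X]
    (p : ℝ) (hp1 : 1 < p)
    (hpadd : ∀ v w : X, |v| ⊓ |w| = 0 → ‖v + w‖ ^ p = ‖v‖ ^ p + ‖w‖ ^ p)
    (P : X →ₗ[ℝ] X) (hP2 : ∀ x, P (P x) = P x) (hPc : ∀ x, ‖P x‖ ≤ ‖x‖)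
    (πA πB : X →ₗ[ℝ] X)
    (hcompl : ∀ x, πA x + πB x = x)
    (hAB : ∀ x y : X, |πA x| ⊓ |πB y| = 0)
    (hAcontr : ∀ x : X, |πA x| ≤ |x|) (hBcontr : ∀ x : X, |πB x| ≤ |x|)
    (u : X) (hu : P u = u)
    (hsupp : πA (P (πB u)) = 0) :
    πB (P (πA u)) = 0 ∧ P (πA u) = πA u :=
  stmt11_general p hp1 hpadd P hPc πA πB hcompl hAB u hu hsupp
end

section
/- Let p ∈ (2,∞) and x, y ∈ ℝ^n with x ∉ span{y}, both nonzero, and suppose x and y are NOT disjoint (x_k y_k ≠ 0 for some k). Define N(α) = (Σ_k |x_k + α y_k|^p)^{1/p}. If N'(0) = 0, then N''(α) does not converge to 0 as α → 0⁺ (along the set where N'' exists); in fact limsup_{α→0⁺} N''(α) > 0. -/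
open Real Filter Topology

lemma auxA (p : ℝ) (hp : 2 < p) (t : ℝ) :
    HasDerivAt (fun s : ℝ => |s| ^ p) (p * |t| ^ (p - 2) * t) t := by
  rcases eq_or_ne t 0 with rfl | ht
  · simp only [abs_zero, mul_zero]
    rw [hasDerivAt_iff_tendsto_slope]
    have hb : Tendsto (fun s : ℝ => |s| ^ (p - 1)) (𝓝[≠] (0:ℝ)) (𝓝 0) := by
      have hc : ContinuousAt (fun s : ℝ => |s| ^ (p - 1)) 0 :=
        continuous_abs.continuousAt.rpow_const (Or.inr (by linarith))
      have h00 : (|(0:ℝ)| ^ (p - 1)) = 0 := by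
        rw [abs_zero, Real.zero_rpow (by linarith)]
      have := hc.tendsto
      rw [h00] at this
      exact tendsto_nhdsWithin_of_tendsto_nhds this
    apply squeeze_zero_norm _ hb
    intro s
    have h0 : |(0:ℝ)| ^ p = 0 := by rw [abs_zero, Real.zero_rpow (by linarith)]
    rcases eq_or_ne s 0 with rfl | hs
    · simp [slope, Real.zero_rpow (by linarith : p - 1 ≠ 0)]
    · have h1 : slope (fun s : ℝ => |s| ^ p) 0 s = |s| ^ p / s := by
        simp only [slope, h0, sub_zero, vsub_eq_sub, smul_eq_mul]
        rw [div_eq_inv_mul]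
      rw [h1, Real.norm_eq_abs, abs_div, abs_of_nonneg (Real.rpow_nonneg (abs_nonneg s) p),
        Real.rpow_sub (abs_pos.2 hs), Real.rpow_one]
  · have h := (hasDerivAt_abs ht).rpow_const (p := p) (Or.inl (abs_ne_zero.2 ht))
    convert h using 1
    have h1 : |t| ^ (p - 1) = |t| ^ (p - 2) * |t| := by
      rw [show p - 1 = (p - 2) + 1 by ring, Real.rpow_add (abs_pos.2 ht), Real.rpow_one]
    rw [h1]
    have h2 : (SignType.sign t : ℝ) * |t| = t := sign_mul_abs t
    linear_combination (-(p * |t| ^ (p - 2))) * h2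

lemma auxB (p : ℝ) (hp : 2 < p) (t : ℝ) :
    HasDerivAt (fun s : ℝ => p * |s| ^ (p - 2) * s) (p * (p - 1) * |t| ^ (p - 2)) t := by
  rcases eq_or_ne t 0 with rfl | ht
  · have h0 : |(0:ℝ)| ^ (p - 2) = 0 := by rw [abs_zero, Real.zero_rpow (by linarith)]
    rw [h0, mul_zero, hasDerivAt_iff_tendsto_slope]
    have hb : Tendsto (fun s : ℝ => p * |s| ^ (p - 2)) (𝓝[≠] (0:ℝ)) (𝓝 0) := by
      have hc : ContinuousAt (fun s : ℝ => p * |s| ^ (p - 2)) 0 :=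
        (continuous_abs.continuousAt.rpow_const (Or.inr (by linarith))).const_mul p
      have h00 : p * |(0:ℝ)| ^ (p - 2) = 0 := by rw [h0, mul_zero]
      have := hc.tendsto
      rw [h00] at this
      exact tendsto_nhdsWithin_of_tendsto_nhds this
    apply hb.congr'
    filter_upwards [self_mem_nhdsWithin] with s hs
    have hs : s ≠ 0 := hs
    simp only [slope, vsub_eq_sub, abs_zero, Real.zero_rpow (by linarith : p - 2 ≠ 0),
      mul_zero, zero_mul, sub_zero, smul_eq_mul]
    field_simp
  · have h1 := ((hasDerivAt_abs ht).rpow_const (p := p - 2)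
      (Or.inl (abs_ne_zero.2 ht))).const_mul p
    have h2 : HasDerivAt (fun s : ℝ => p * |s| ^ (p - 2) * s) _ t := h1.fun_mul (hasDerivAt_id' t)
    convert h2 using 1
    have e1 : |t| ^ (p - 2 - 1) * |t| = |t| ^ (p - 2) := by
      rw [← Real.rpow_add_one (abs_ne_zero.2 ht)]
      norm_num
    have h5 : (SignType.sign t : ℝ) * |t| ^ (p - 2 - 1) * t = |t| ^ (p - 2) := by
      rw [mul_comm ((SignType.sign t : ℝ)) _, mul_assoc, sign_mul_self, e1]
    simp only [mul_one]
    linear_combination (-(p * (p - 2))) * h5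

theorem stmt13 (p : ℝ) (hp : 2 < p) (n : ℕ) (x y : Fin n → ℝ)
    (hx : x ≠ 0) (hy : y ≠ 0) (hspan : x ∉ Submodule.span ℝ {y})
    (hndisj : ∃ k, x k * y k ≠ 0)
    (N : ℝ → ℝ) (hN : N = fun α : ℝ => (∑ k, |x k + α * y k| ^ p) ^ (1/p))
    (hN'0 : HasDerivAt N 0 0) :
    ∃ c > (0:ℝ), ∀ δ > (0:ℝ), ∃ α ∈ Set.Ioo (0:ℝ) δ, ∃ d : ℝ,
      HasDerivAt (deriv N) d α ∧ c ≤ d := by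
  set S : ℝ → ℝ := fun α => ∑ k, |x k + α * y k| ^ p with hS_def
  set S1 : ℝ → ℝ := fun α => ∑ k, p * |x k + α * y k| ^ (p - 2) * (x k + α * y k) * y k
    with hS1_def
  set S2 : ℝ → ℝ := fun α => ∑ k, p * (p - 1) * |x k + α * y k| ^ (p - 2) * y k * y k
    with hS2_def
  -- derivative of the inner affine map
  have hlin : ∀ (k : Fin n) (α : ℝ), HasDerivAt (fun β : ℝ => x k + β * y k) (y k) α := by
    intro k α
    simpa using ((hasDerivAt_id α).mul_const (y k)).const_add (x k)
  have hS : ∀ α, HasDerivAt S (S1 α) α := by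
    intro α
    apply HasDerivAt.fun_sum
    intro k _
    have := (auxA p hp (x k + α * y k)).comp α (hlin k α)
    simp only [mul_assoc] at this ⊢
    exact this
  have hS1 : ∀ α, HasDerivAt S1 (S2 α) α := by
    intro α
    apply HasDerivAt.fun_sum
    intro k _
    have h1 := ((auxB p hp (x k + α * y k)).comp α (hlin k α)).mul_const (y k)
    exact h1
  have hSpos : ∀ α, 0 < S α := by
    intro α
    have hne : ∃ k, x k + α * y k ≠ 0 := by
      by_contra h
      push_neg at h
      apply hspan
      rw [Submodule.mem_span_singleton]
      refine ⟨-α, funext fun k => ?_⟩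
      have hk := h k
      simp only [Pi.smul_apply, smul_eq_mul]
      linarith
    obtain ⟨k₀, hk₀⟩ := hne
    apply Finset.sum_pos' (fun k _ => Real.rpow_nonneg (abs_nonneg _) p)
    exact ⟨k₀, Finset.mem_univ _, Real.rpow_pos_of_pos (abs_pos.2 hk₀) p⟩
  set G : ℝ → ℝ := fun α => S1 α * (1/p) * S α ^ (1/p - 1) with hG_def
  have hN' : ∀ α, HasDerivAt N (G α) α := by
    intro α
    rw [hN]
    exact (hS α).rpow_const (Or.inl (hSpos α).ne')
  have hderivN : deriv N = G := funext fun α => (hN' α).deriv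
  set D : ℝ → ℝ := fun α =>
    S2 α * (1/p) * S α ^ (1/p - 1)
      + S1 α * (1/p) * (S1 α * (1/p - 1) * S α ^ (1/p - 1 - 1)) with hD_def
  have hG : ∀ α, HasDerivAt G (D α) α := by
    intro α
    have h1 : HasDerivAt (fun β => S1 β * (1/p)) (S2 α * (1/p)) α := (hS1 α).mul_const _
    have h2 : HasDerivAt (fun β => S β ^ (1/p - 1)) (S1 α * (1/p - 1) * S α ^ (1/p - 1 - 1)) α :=
      (hS α).rpow_const (Or.inl (hSpos α).ne')
    exact h1.mul h2
  -- S1 0 = 0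
  have hG0 : G 0 = 0 := (hN'0.unique (hN' 0)).symm
  have hS10 : S1 0 = 0 := by
    have h1 : S 0 ^ (1/p - 1) ≠ 0 := (Real.rpow_pos_of_pos (hSpos 0) _).ne'
    have hp0 : (1:ℝ)/p ≠ 0 := by positivity
    rw [hG_def] at hG0
    rcases mul_eq_zero.1 hG0 with h | h
    · rcases mul_eq_zero.1 h with h' | h'
      · exact h'
      · exact absurd h' hp0
    · exact absurd h h1
  -- D 0 > 0
  have hS20 : 0 < S2 0 := by
    obtain ⟨K, hK⟩ := hndisj
    have hxK : x K ≠ 0 := fun h => hK (by simp [h])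
    have hyK : y K ≠ 0 := fun h => hK (by simp [h])
    apply Finset.sum_pos'
    · intro k _
      have h1 : (0:ℝ) ≤ |x k + 0 * y k| ^ (p - 2) := Real.rpow_nonneg (abs_nonneg _) _
      have e : p * (p - 1) * |x k + 0 * y k| ^ (p - 2) * y k * y k
          = (p * (p - 1) * |x k + 0 * y k| ^ (p - 2)) * (y k * y k) := by ring
      rw [e]
      exact mul_nonneg (mul_nonneg (mul_nonneg (by linarith) (by linarith)) h1)
        (mul_self_nonneg _)
    · refine ⟨K, Finset.mem_univ _, ?_⟩
      have h1 : (0:ℝ) < |x K + 0 * y K| ^ (p - 2) := by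
        apply Real.rpow_pos_of_pos
        simpa using abs_pos.2 hxK
      have h2 : (0:ℝ) < y K * y K := mul_self_pos.2 hyK
      have e : p * (p - 1) * |x K + 0 * y K| ^ (p - 2) * y K * y K
          = (p * (p - 1) * |x K + 0 * y K| ^ (p - 2)) * (y K * y K) := by ring
      rw [e]
      exact mul_pos (mul_pos (mul_pos (by linarith) (by linarith)) h1) h2
  have hD0 : 0 < D 0 := by
    rw [hD_def]
    simp only [hS10, zero_mul, mul_zero, add_zero]
    have := Real.rpow_pos_of_pos (hSpos 0) (1/p - 1)
    have hp' : (0:ℝ) < 1/p := by positivity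
    positivity
  -- continuity of D at 0
  have hScont : ContinuousAt S 0 := (hS 0).continuousAt
  have hS1cont : ContinuousAt S1 0 := (hS1 0).continuousAt
  have hS2cont : ContinuousAt S2 0 := by
    apply Continuous.continuousAt
    apply continuous_finset_sum
    intro k _
    apply Continuous.mul (Continuous.mul ?_ continuous_const) continuous_const
    apply Continuous.mul continuous_const
    exact (continuous_abs.comp (continuous_const.add
      (continuous_id.mul continuous_const))).rpow_const (fun _ => Or.inr (by linarith))
  have hDcont : ContinuousAt D 0 := by
    have hrp1 : ContinuousAt (fun α => S α ^ (1/p - 1)) 0 :=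
      hScont.rpow_const (Or.inl (hSpos 0).ne')
    have hrp2 : ContinuousAt (fun α => S α ^ (1/p - 1 - 1)) 0 :=
      hScont.rpow_const (Or.inl (hSpos 0).ne')
    exact ((hS2cont.mul continuousAt_const).mul hrp1).add
      ((hS1cont.mul continuousAt_const).mul
        ((hS1cont.mul continuousAt_const).mul hrp2))
  -- extract neighborhood
  have hev : D ⁻¹' (Set.Ioi (D 0 / 2)) ∈ 𝓝 (0:ℝ) :=
    hDcont (Ioi_mem_nhds (half_lt_self hD0))
  obtain ⟨δ₀, hδ₀, hball⟩ := Metric.mem_nhds_iff.1 hev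
  refine ⟨D 0 / 2, half_pos hD0, fun δ hδ => ?_⟩
  set α := min δ δ₀ / 2 with hα_def
  have hαpos : 0 < α := by positivity
  have hαδ : α < δ := by
    have : min δ δ₀ ≤ δ := min_le_left _ _
    linarith
  have hαδ₀ : α < δ₀ := by
    have : min δ δ₀ ≤ δ₀ := min_le_right _ _
    linarith
  have hmem : α ∈ Metric.ball (0:ℝ) δ₀ := by
    simp [Real.dist_eq, abs_of_pos hαpos, hαδ₀]
  have hDα : D 0 / 2 < D α := hball hmem
  exact ⟨α, ⟨hαpos, hαδ⟩, D α, by rw [hderivN]; exact hG α, le_of_lt hDα⟩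
end
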